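/- The Fourier transform of the Sinc kernel K(t) = σ² sin(Δπt)/(Δπt) (with K(0) = σ²) equals (σ²/Δ) on the interval (-Δ/2, Δ/2) and 0 outside the closed interval [-Δ/2, Δ/2], where Δ > 0; in particular, the spectral support of the Sinc kernel is the compact interval [-Δ/2, Δ/2]. -/

import Mathlib

/-!
The kernel is `σ² · sinc (Δπt)`, and `∫_{-a}^{a} e^{2πiξt} dξ = 2a · sinc (2πat)` by scaling the
classical `∫_{-r}^{r} e^{ix} dx = 2r · sinc r`. With `a = Δ/2` and height `σ²/Δ` on `(-Δ/2, Δ/2)`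
the box therefore has the Sinc kernel as its inverse Fourier transform.
-/

open MeasureTheory Real FourierTransform

/-- The Sinc kernel with magnitude `σ` and width `Δ`. -/
noncomputable def sincKernel (σ Δ t : ℝ) : ℝ :=
  if t = 0 then σ ^ 2 else σ ^ 2 * Real.sin (Δ * π * t) / (Δ * π * t)

lemma sincKernel_eq_mul_sinc (σ : ℝ) {Δ : ℝ} (hΔ : Δ ≠ 0) (t : ℝ) :
    sincKernel σ Δ t = σ ^ 2 * sinc (Δ * π * t) := by
  rcases eq_or_ne t 0 with rfl | ht
  · simp [sincKernel]
  · rw [sincKernel, if_neg ht, sinc_of_ne_zero (by positivity), mul_div_assoc]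

lemma integral_exp_mul_I_eq_sinc_mul (s a : ℝ) :
    ∫ x in -a..a, Complex.exp (↑(s * x) * Complex.I) = 2 * a * sinc (s * a) := by
  rcases eq_or_ne s 0 with rfl | hs
  · simp [two_mul]
  rw [intervalIntegral.integral_comp_mul_left (fun x : ℝ ↦ Complex.exp (x * Complex.I)) hs,
    mul_neg, integral_exp_mul_I_eq_sinc, Complex.real_smul]
  push_cast
  field_simp [Complex.ofReal_ne_zero.mpr hs]

lemma fourierInv_indicator_Ioo {E : Type*} [NormedAddCommGroup E] [NormedSpace ℂ E]
    [CompleteSpace E] {a : ℝ} (ha : 0 ≤ a) (c : E) (t : ℝ) :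
    𝓕⁻ ((Set.Ioo (-a) a).indicator fun _ ↦ c) t = ((2 * a * sinc (2 * π * t * a) : ℝ) : ℂ) • c := by
  rw [Real.fourierInv_eq']
  simp_rw [← Set.indicator_smul_apply _ (fun v ↦ Complex.exp (↑(2 * π * inner ℝ v t) * Complex.I))]
  rw [integral_indicator measurableSet_Ioo, ← integral_Ioc_eq_integral_Ioo,
    ← intervalIntegral.integral_of_le (neg_le_self ha), intervalIntegral.integral_smul_const]
  congr 1
  simp_rw [RCLike.inner_apply, conj_trivial, ← mul_assoc]
  exact_mod_cast integral_exp_mul_I_eq_sinc_mul _ _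

theorem stmt_8_general (σ Δ : ℝ) (hΔ : 0 < Δ) :
    ∃ G : ℝ → ℂ,
      (∀ ξ ∈ Set.Ioo (-(Δ / 2)) (Δ / 2), G ξ = ((σ ^ 2 / Δ : ℝ) : ℂ)) ∧
      (∀ ξ : ℝ, ξ ∉ Set.Icc (-(Δ / 2)) (Δ / 2) → G ξ = 0) ∧
      ∀ t : ℝ, FourierTransformInv.fourierInv G t = ((sincKernel σ Δ t : ℝ) : ℂ) := by
  refine ⟨(Set.Ioo (-(Δ / 2)) (Δ / 2)).indicator fun _ ↦ ((σ ^ 2 / Δ : ℝ) : ℂ),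
    fun ξ hξ ↦ Set.indicator_of_mem hξ _,
    fun ξ hξ ↦ Set.indicator_of_notMem (fun h ↦ hξ (Set.Ioo_subset_Icc_self h)) _,
    fun t ↦ ?_⟩
  rw [fourierInv_indicator_Ioo (half_pos hΔ).le, sincKernel_eq_mul_sinc σ hΔ.ne', smul_eq_mul,
    ← Complex.ofReal_mul]
  congr 1
  field_simp

theorem stmt_8 (σ Δ : ℝ) (hσ : 0 < σ) (hΔ : 0 < Δ) :
    ∃ G : ℝ → ℂ,
      (∀ ξ ∈ Set.Ioo (-(Δ / 2)) (Δ / 2), G ξ = ((σ ^ 2 / Δ : ℝ) : ℂ)) ∧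
      (∀ ξ : ℝ, ξ ∉ Set.Icc (-(Δ / 2)) (Δ / 2) → G ξ = 0) ∧
      ∀ t : ℝ, FourierTransformInv.fourierInv G t = ((sincKernel σ Δ t : ℝ) : ℂ) :=
  stmt_8_general σ Δ hΔ
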